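/- arXiv:1306.0765 — 5 statements merged into one kernel-verified Lean document; each statement's English description precedes it below -/
import Mathlib

section
/- For integers m > 3, g(2^m) < 2^m, where g(n) is the largest k such that there exist distinct primes P_1, ..., P_k with P_i dividing n+i for each 1 ≤ i ≤ k. -/
/-- `(n, k)` has a prime representation: there are distinct primes `P₁, …, P_k`
with `Pᵢ ∣ n + i` for `1 ≤ i ≤ k`. -/
def primeRep (n k : ℕ) : Prop :=
  ∃ P : Fin k → ℕ, Function.Injective P ∧ ∀ i : Fin k, (P i).Prime ∧ P i ∣ n + (i : ℕ) + 1

/-!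
Write `2^m = 8b` with `b = 2^(m-3)`. The three numbers `9b`, `12b` and `16b` lie in
`(2^m, 2^(m+1)]` and have no prime factors besides `2` and `3`, so they cannot receive three
distinct primes.
-/

theorem primeRep.card_le {n k : ℕ} (h : primeRep n k) {J T : Finset ℕ}
    (hJ : ∀ j ∈ J, 1 ≤ j ∧ j ≤ k) (hT : ∀ j ∈ J, ∀ p, p.Prime → p ∣ n + j → p ∈ T) :
    J.card ≤ T.card := by
  obtain ⟨P, hinj, hP⟩ := h
  let f : ℕ → ℕ := fun j => if hj : j - 1 < k then P ⟨j - 1, hj⟩ else 0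
  have hf : ∀ j ∈ J, ∃ hj : j - 1 < k, f j = P ⟨j - 1, hj⟩ := fun j hjJ =>
    have hj : j - 1 < k := by have := hJ j hjJ; omega
    ⟨hj, dif_pos hj⟩
  refine Finset.card_le_card_of_injOn f (fun j hjJ => ?_) (fun i hiJ j hjJ hij => ?_)
  · obtain ⟨hj, hfj⟩ := hf j hjJ
    obtain ⟨hprime, hdvd⟩ := hP ⟨j - 1, hj⟩
    have hshift : n + (j - 1) + 1 = n + j := by have := hJ j hjJ; omega
    rw [hfj]
    exact hT j hjJ _ hprime (hshift ▸ hdvd)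
  · obtain ⟨hi, hfi⟩ := hf i hiJ
    obtain ⟨hj, hfj⟩ := hf j hjJ
    have := Fin.mk.inj_iff.mp (hinj (hfi.symm.trans (hij.trans hfj)))
    have := hJ i hiJ
    have := hJ j hjJ
    omega

theorem Nat.Prime.eq_two_or_eq_three_of_dvd {p a b : ℕ} (hp : p.Prime)
    (h : p ∣ 2 ^ a * 3 ^ b) : p = 2 ∨ p = 3 := by
  rcases hp.dvd_mul.mp h with h | h
  · exact .inl ((Nat.prime_dvd_prime_iff_eq hp Nat.prime_two).mp (hp.dvd_of_dvd_pow h))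
  · exact .inr ((Nat.prime_dvd_prime_iff_eq hp Nat.prime_three).mp (hp.dvd_of_dvd_pow h))

/-- For integers `m > 3`, `g(2^m) < 2^m`: every `k` admitting a prime
representation for `n = 2^m` satisfies `k < 2^m`. -/
theorem g_two_pow_lt (m : ℕ) (hm : m > 3) (k : ℕ) (h : primeRep (2 ^ m) k) :
    k < 2 ^ m := by
  by_contra! hk
  obtain ⟨r, rfl⟩ : ∃ r, m = r + 3 := ⟨m - 3, by omega⟩
  set b := 2 ^ r
  have hb : 0 < b := Nat.two_pow_pos r
  have hn : 2 ^ (r + 3) = 8 * b := by rw [pow_add]; ring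
  rw [hn] at hk h
  have hJ : ({b, 4 * b, 8 * b} : Finset ℕ).card = 3 :=
    Finset.card_eq_three.mpr ⟨_, _, _, by omega, by omega, by omega, rfl⟩
  have hsmooth : ∀ j ∈ ({b, 4 * b, 8 * b} : Finset ℕ), ∃ e f, 8 * b + j = 2 ^ e * 3 ^ f := by
    simp only [Finset.mem_insert, Finset.mem_singleton]
    rintro j (rfl | rfl | rfl)
    exacts [⟨r, 2, by ring⟩, ⟨r + 2, 1, by ring⟩, ⟨r + 4, 0, by ring⟩]
  have := h.card_le (J := {b, 4 * b, 8 * b}) (T := {2, 3})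
    (fun j hj => by simp only [Finset.mem_insert, Finset.mem_singleton] at hj; omega)
    (fun j hj p hp hdvd => by
      obtain ⟨e, f, he⟩ := hsmooth j hj
      simpa using hp.eq_two_or_eq_three_of_dvd (he ▸ hdvd))
  simp [hJ] at this
end

section
/- Let x, y, z be real numbers with y ≥ 2, and suppose Ψ(x+z, y) − Ψ(x, y) > π(y), where Ψ(X, y) counts positive integers ≤ X all of whose prime factors are ≤ y, and π is the prime counting function. Then g(⌊x⌋) < z, where g(n) is the largest k such that there exist distinct primes P_1, ..., P_k with P_i | (n+i). -/
/-- `Ψ(x, y)`: the number of positive integers `≤ x` all of whose prime factors are `≤ y`. -/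
noncomputable def Psi (x y : ℝ) : ℕ :=
  Set.ncard {m : ℕ | 0 < m ∧ (m : ℝ) ≤ x ∧ ∀ p : ℕ, p.Prime → p ∣ m → (p : ℝ) ≤ y}

/-- `π(y)`: the number of primes `≤ y`. -/
noncomputable def piR (y : ℝ) : ℕ :=
  Set.ncard {p : ℕ | p.Prime ∧ (p : ℝ) ≤ y}

theorem primeRep.ncard_le {n k : ℕ} (hk : primeRep n k) {S T : Set ℕ} (hT : T.Finite)
    (hS : ∀ m ∈ S, n < m ∧ m ≤ n + k ∧ ∀ p : ℕ, p.Prime → p ∣ m → p ∈ T) :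
    S.ncard ≤ T.ncard := by
  obtain ⟨P, hPinj, hP⟩ := hk
  set I : Set (Fin k) := {i | n + (i : ℕ) + 1 ∈ S}
  have hS_image : S ⊆ (fun i : Fin k => n + (i : ℕ) + 1) '' I := by
    intro m hm
    obtain ⟨hnm, hmk, -⟩ := hS m hm
    have hm_eq : n + (m - n - 1) + 1 = m := by omega
    exact ⟨⟨m - n - 1, by omega⟩, by simpa [I, hm_eq] using hm, hm_eq⟩
  have hP_image : P '' I ⊆ T := by
    rintro _ ⟨i, hi, rfl⟩
    exact (hS _ hi).2.2 _ (hP i).1 (hP i).2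
  calc S.ncard ≤ ((fun i : Fin k => n + (i : ℕ) + 1) '' I).ncard :=
        Set.ncard_le_ncard hS_image (Set.toFinite _)
    _ ≤ I.ncard := Set.ncard_image_le (Set.toFinite _)
    _ = (P '' I).ncard := (Set.ncard_image_of_injective I hPinj).symm
    _ ≤ T.ncard := Set.ncard_le_ncard hP_image hT

theorem finite_setOf_cast_le (X : ℝ) : {m : ℕ | (m : ℝ) ≤ X}.Finite :=
  (Set.finite_Iic ⌊X⌋₊).subset fun _ hm => Nat.le_floor hm

def smoothIn (a b y : ℝ) : Set ℕ :=
  {m | 0 < m ∧ a < m ∧ (m : ℝ) ≤ b ∧ ∀ p : ℕ, p.Prime → p ∣ m → (p : ℝ) ≤ y}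

theorem Psi_add_le (x y z : ℝ) : Psi (x + z) y ≤ Psi x y + (smoothIn x (x + z) y).ncard := by
  set A := {m : ℕ | 0 < m ∧ (m : ℝ) ≤ x ∧ ∀ p : ℕ, p.Prime → p ∣ m → (p : ℝ) ≤ y}
  have hA : A.Finite := (finite_setOf_cast_le x).subset fun _ hm => hm.2.1
  have hC : (smoothIn x (x + z) y).Finite :=
    (finite_setOf_cast_le (x + z)).subset fun _ hm => hm.2.2.1
  have hsub : {m : ℕ | 0 < m ∧ (m : ℝ) ≤ x + z ∧ ∀ p : ℕ, p.Prime → p ∣ m → (p : ℝ) ≤ y}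
      ⊆ A ∪ smoothIn x (x + z) y := by
    rintro m ⟨hm, hmz, hsmooth⟩
    rcases le_or_gt (m : ℝ) x with hmx | hxm
    · exact Or.inl ⟨hm, hmx, hsmooth⟩
    · exact Or.inr ⟨hm, hxm, hmz, hsmooth⟩
  exact (Set.ncard_le_ncard hsub (hA.union hC)).trans (Set.ncard_union_le _ _)

theorem ncard_smoothIn_le_piR {x y z : ℝ} {k : ℕ} (hk : primeRep ⌊x⌋₊ k) (hzk : z ≤ k) :
    (smoothIn x (x + z) y).ncard ≤ piR y := by
  refine hk.ncard_le ((finite_setOf_cast_le y).subset fun _ hp => hp.2) ?_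
  rintro m ⟨hm, hxm, hmz, hsmooth⟩
  have hm_lt : (m : ℝ) < ⌊x⌋₊ + 1 + k := by linarith [Nat.lt_floor_add_one x]
  have hm_le : m ≤ ⌊x⌋₊ + k := by
    have : m < ⌊x⌋₊ + 1 + k := by exact_mod_cast hm_lt
    omega
  exact ⟨(Nat.floor_lt' hm.ne').2 hxm, hm_le, fun p hp hpm => ⟨hp, hsmooth p hp hpm⟩⟩

theorem g_floor_lt_of_smooth_general (x y z : ℝ)
    (h : Psi (x + z) y > Psi x y + piR y) (k : ℕ) (hk : primeRep ⌊x⌋₊ k) :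
    (k : ℝ) < z := by
  by_contra! hzk
  have := Psi_add_le x y z
  have := ncard_smoothIn_le_piR (y := y) hk hzk
  omega

/-- Key lemma: if `Ψ(x+z, y) − Ψ(x, y) > π(y)` then `g(⌊x⌋) < z`. -/
theorem g_floor_lt_of_smooth (x y z : ℝ) (hy : y ≥ 2)
    (h : Psi (x + z) y > Psi x y + piR y) (k : ℕ) (hk : primeRep ⌊x⌋₊ k) :
    (k : ℝ) < z :=
  g_floor_lt_of_smooth_general x y z h k hk
end

section
/- Assume that for every ε > 0 there exists N such that for all n ≥ N, Ψ(n + n^ε, n^ε) − Ψ(n, n^ε) ≥ c(ε)·n^ε for some constant c(ε) > 0 (smooth numbers in short intervals conjecture). Then for every ε > 0, g(n) < n^ε for all sufficiently large n. -/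
open Filter Nat
open scoped Nat.Prime

theorem primeRep.exists_injOn {n k : ℕ} (h : primeRep n k) :
    ∃ P : ℕ → ℕ, Set.InjOn P (Set.Ioc n (n + k)) ∧
      ∀ m ∈ Set.Ioc n (n + k), (P m).Prime ∧ P m ∣ m := by
  obtain ⟨P, hinj, hP⟩ := h
  have hidx {m : ℕ} (hm : m ∈ Set.Ioc n (n + k)) : m - n - 1 < k := by
    obtain ⟨h₁, h₂⟩ := hm; omega
  refine ⟨fun m => if h : m - n - 1 < k then P ⟨m - n - 1, h⟩ else 0, ?_, ?_⟩
  · intro m₁ hm₁ m₂ hm₂ heq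
    simp only [dif_pos (hidx hm₁), dif_pos (hidx hm₂)] at heq
    have := congrArg Fin.val (hinj heq)
    simp only at this
    obtain ⟨h₁, -⟩ := hm₁; obtain ⟨h₂, -⟩ := hm₂
    omega
  · intro m hm
    obtain ⟨hprime, hdvd⟩ := hP ⟨m - n - 1, hidx hm⟩
    have hm_eq : n + (m - n - 1) + 1 = m := by obtain ⟨h₁, -⟩ := hm; omega
    rw [Fin.val_mk, hm_eq] at hdvd
    simp only [dif_pos (hidx hm)]
    exact ⟨hprime, hdvd⟩

theorem primeRep.ncard_smooth_Ioc_le_primeCounting {n k : ℕ} (h : primeRep n k) (y : ℝ) :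
    {m ∈ Set.Ioc n (n + k) | ∀ p : ℕ, p.Prime → p ∣ m → (p : ℝ) ≤ y}.ncard ≤ π ⌊y⌋₊ := by
  obtain ⟨P, hinj, hP⟩ := h.exists_injOn
  rw [← primesLE_card_eq_primeCounting, ← Set.ncard_coe_finset]
  refine Set.ncard_le_ncard_of_injOn P (fun m hm => ?_) (hinj.mono fun m hm => hm.1)
  obtain ⟨hprime, hdvd⟩ := hP m hm.1
  exact mem_primesLE.mpr ⟨Nat.le_floor (hm.2 _ hprime hdvd), hprime⟩

/-- The paper's key lemma: `Ψ(x + z, y) - Ψ(x, y) > π(y)` forces `g(x) < z`. -/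
theorem primeRep.Psi_add_le {n k : ℕ} (h : primeRep n k) {y z : ℝ} (hz : z ≤ k) :
    Psi (n + z) y ≤ Psi n y + π ⌊y⌋₊ := by
  set smooth : ℕ → Prop := fun m => ∀ p : ℕ, p.Prime → p ∣ m → (p : ℝ) ≤ y
  have hfin : {m : ℕ | 0 < m ∧ (m : ℝ) ≤ n ∧ smooth m}.Finite :=
    (Set.finite_Iic n).subset fun m hm => by exact_mod_cast hm.2.1
  have hdiff : {m : ℕ | 0 < m ∧ (m : ℝ) ≤ n + z ∧ smooth m} \
      {m : ℕ | 0 < m ∧ (m : ℝ) ≤ n ∧ smooth m} ⊆ {m ∈ Set.Ioc n (n + k) | smooth m} := by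
    rintro m ⟨⟨hpos, hle, hsmooth⟩, hnot⟩
    have hnm : n < m := by
      by_contra! hmn
      exact hnot ⟨hpos, by exact_mod_cast hmn, hsmooth⟩
    have hmk : (m : ℝ) ≤ (n + k : ℕ) := by push_cast; linarith
    exact ⟨⟨hnm, by exact_mod_cast hmk⟩, hsmooth⟩
  calc Psi (n + z) y
      ≤ (_ \ _ : Set ℕ).ncard + Psi n y := Set.ncard_le_ncard_sdiff_add_ncard _ _ hfin
    _ ≤ π ⌊y⌋₊ + Psi n y := by
        gcongr
        exact (Set.ncard_le_ncard hdiff).trans (h.ncard_smooth_Ioc_le_primeCounting y)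
    _ = Psi n y + π ⌊y⌋₊ := add_comm _ _

theorem eventually_primeCounting_floor_lt_mul {c : ℝ} (hc : 0 < c) :
    ∀ᶠ y : ℝ in atTop, (π ⌊y⌋₊ : ℝ) < c * y := by
  filter_upwards [Chebyshev.eventually_primeCounting_le one_pos,
    Real.tendsto_log_atTop.eventually_gt_atTop ((Real.log 4 + 1) / c), eventually_gt_atTop 0]
    with y hπ hlog hy
  have hlog_pos : 0 < Real.log y := lt_of_le_of_lt (by positivity) hlog
  calc (π ⌊y⌋₊ : ℝ) ≤ (Real.log 4 + 1) * y / Real.log y := hπ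
    _ < c * y := by
        rw [div_lt_iff₀ hlog_pos, mul_right_comm]
        rw [div_lt_iff₀ hc] at hlog
        nlinarith

/-- Assuming the smooth-numbers-in-short-intervals conjecture,
`g(n) < n^ε` for every `ε > 0` and all sufficiently large `n`. -/
theorem g_lt_rpow_of_smooth_conjecture
    (hconj : ∀ ε : ℝ, ε > 0 → ∃ c : ℝ, c > 0 ∧ ∃ N : ℕ, ∀ n : ℕ, n ≥ N →
      (Psi ((n : ℝ) + (n : ℝ) ^ ε) ((n : ℝ) ^ ε) : ℝ) ≥
        (Psi (n : ℝ) ((n : ℝ) ^ ε) : ℝ) + c * (n : ℝ) ^ ε) :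
    ∀ ε : ℝ, ε > 0 → ∃ N : ℕ, ∀ n : ℕ, n ≥ N → ∀ k : ℕ, primeRep n k →
      (k : ℝ) < (n : ℝ) ^ ε := by
  intro ε hε
  obtain ⟨c, hc, N₀, hsmooth⟩ := hconj ε hε
  have hy : Tendsto (fun n : ℕ => (n : ℝ) ^ ε) atTop atTop :=
    (tendsto_rpow_atTop hε).comp tendsto_natCast_atTop_atTop
  obtain ⟨N₁, hπ⟩ := eventually_atTop.mp (hy.eventually (eventually_primeCounting_floor_lt_mul hc))
  refine ⟨max N₀ N₁, fun n hn k hk => ?_⟩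
  by_contra! hkn
  have hupper : (Psi (n + n ^ ε) (n ^ ε) : ℝ) ≤ Psi n (n ^ ε) + π ⌊(n : ℝ) ^ ε⌋₊ := by
    exact_mod_cast hk.Psi_add_le hkn
  linarith [hsmooth n (le_of_max_le_left hn), hπ n (le_of_max_le_right hn)]
end

section
/- Suppose Grimm's conjecture holds: whenever n+1, ..., n+k are all composite, there exist distinct primes P_i with P_i | (n+i) for 1 ≤ i ≤ k. Suppose also that g(n) < n^ε for all sufficiently large n, for a fixed 0 < ε < 1. Then p_{i+1} − p_i < p_i^ε for all sufficiently large i, where p_i denotes the i-th prime. -/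
/-- The prime `n + k + 1` is new: it exceeds every `P i ≤ n + i + 1`. -/
theorem primeRep.succ_of_prime {n k : ℕ} (h : primeRep n k) (hprime : (n + k + 1).Prime) :
    primeRep n (k + 1) := by
  obtain ⟨P, hinj, hP⟩ := h
  have hlt : ∀ i, P i < n + k + 1 := fun i =>
    calc P i ≤ n + i + 1 := Nat.le_of_dvd (by omega) (hP i).2
      _ < n + k + 1 := by have := i.2; omega
  refine ⟨Fin.snoc P (n + k + 1), Fin.snoc_injective_of_injective hinj ?_, ?_⟩
  · rintro ⟨i, hi⟩
    exact (hlt i).ne hi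
  · refine Fin.lastCases ?_ (fun i => ?_)
    · simpa using hprime
    · simpa using hP i

theorem primeRep_nth_prime_gap
    (hgrimm : ∀ n k : ℕ, (∀ i ∈ Finset.Icc 1 k, 1 < n + i ∧ ¬ (n + i).Prime) → primeRep n k)
    (i : ℕ) :
    primeRep (Nat.nth Nat.Prime i) (Nat.nth Nat.Prime (i + 1) - Nat.nth Nat.Prime i) := by
  set p := Nat.nth Nat.Prime i
  set p' := Nat.nth Nat.Prime (i + 1)
  have hp : p.Prime := Nat.prime_nth_prime i
  have hlt : p < p' := Nat.nth_strictMono Nat.infinite_setOfPred_prime (Nat.lt_succ_self i)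
  have hcomposite : ∀ j ∈ Finset.Icc 1 (p' - p - 1), 1 < p + j ∧ ¬ (p + j).Prime := by
    intro j hj
    rw [Finset.mem_Icc] at hj
    refine ⟨by have := hp.two_le; omega, fun hj_prime => ?_⟩
    have := Nat.le_nth_of_lt_nth_succ (show p + j < p' by omega) hj_prime
    omega
  have hnext : p + (p' - p - 1) + 1 = p' := by omega
  have hrep := (hgrimm p _ hcomposite).succ_of_prime
    (by rw [hnext]; exact Nat.prime_nth_prime (i + 1))
  rwa [show p' - p - 1 + 1 = p' - p by omega] at hrep

theorem prime_gap_of_grimm_general (ε : ℝ)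
    (hgrimm : ∀ n k : ℕ, (∀ i ∈ Finset.Icc 1 k, 1 < n + i ∧ ¬ (n + i).Prime) →
      primeRep n k)
    (hg : ∃ N : ℕ, ∀ n : ℕ, n ≥ N → ∀ k : ℕ, primeRep n k → (k : ℝ) < (n : ℝ) ^ ε) :
    ∃ I : ℕ, ∀ i : ℕ, i ≥ I →
      ((Nat.nth Nat.Prime (i + 1) : ℝ) - Nat.nth Nat.Prime i) <
        (Nat.nth Nat.Prime i : ℝ) ^ ε := by
  obtain ⟨N, hN⟩ := hg
  refine ⟨N, fun i hi => ?_⟩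
  have hle : Nat.nth Nat.Prime i ≤ Nat.nth Nat.Prime (i + 1) :=
    Nat.nth_monotone Nat.infinite_setOfPred_prime (Nat.le_succ i)
  have hpN : Nat.nth Nat.Prime i ≥ N :=
    hi.trans (Nat.nth_strictMono Nat.infinite_setOfPred_prime).le_apply
  have hgap := hN _ hpN _ (primeRep_nth_prime_gap hgrimm i)
  rwa [Nat.cast_sub hle] at hgap

/-- Grimm's conjecture together with `g(n) < n^ε` for large `n` implies the
prime gap bound `p_{i+1} − p_i < p_i^ε` for large `i`. -/
theorem prime_gap_of_grimm (ε : ℝ) (hε0 : 0 < ε) (hε1 : ε < 1)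
    (hgrimm : ∀ n k : ℕ, (∀ i ∈ Finset.Icc 1 k, 1 < n + i ∧ ¬ (n + i).Prime) →
      primeRep n k)
    (hg : ∃ N : ℕ, ∀ n : ℕ, n ≥ N → ∀ k : ℕ, primeRep n k → (k : ℝ) < (n : ℝ) ^ ε) :
    ∃ I : ℕ, ∀ i : ℕ, i ≥ I →
      ((Nat.nth Nat.Prime (i + 1) : ℝ) - Nat.nth Nat.Prime i) <
        (Nat.nth Nat.Prime i : ℝ) ^ ε :=
  prime_gap_of_grimm_general ε hgrimm hg
end

section
/- Suppose there exist constants α with 3/8 < α < 1/2 and c₁ > 0 such that Ψ(n + n^α, n^α) − Ψ(n, n^α) > c₁ n^α for all sufficiently large n. Then g(n) < n^α for all sufficiently large n. -/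
open Filter Nat
open scoped Nat.Prime

def smoothUpTo (x y : ℝ) : Set ℕ :=
  {m : ℕ | 0 < m ∧ (m : ℝ) ≤ x ∧ ∀ p : ℕ, p.Prime → p ∣ m → (p : ℝ) ≤ y}

lemma Psi_eq_ncard_smoothUpTo (x y : ℝ) : Psi x y = (smoothUpTo x y).ncard := rfl

lemma finite_smoothUpTo (x y : ℝ) : (smoothUpTo x y).Finite :=
  (Set.finite_Iic ⌊x⌋₊).subset fun _ hm => Nat.le_floor hm.2.1

lemma smoothUpTo_add_diff_subset {n k : ℕ} {P : Fin k → ℕ}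
    (hP : ∀ i : Fin k, (P i).Prime ∧ P i ∣ n + (i : ℕ) + 1) {z : ℝ} (hz : z ≤ k) (y : ℝ) :
    smoothUpTo (n + z) y \ smoothUpTo n y ⊆
      (fun i : Fin k => n + (i : ℕ) + 1) '' {i | P i ≤ ⌊y⌋₊} := by
  rintro m ⟨⟨hm0, hmz, hsmooth⟩, hm_not_le⟩
  have hnm : n < m := by
    by_contra! hmn
    exact hm_not_le ⟨hm0, by exact_mod_cast hmn, hsmooth⟩
  have hmk : m - n - 1 < k := by
    have : ((m - n : ℕ) : ℝ) ≤ k := by rw [Nat.cast_sub hnm.le]; linarith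
    have : m - n ≤ k := by exact_mod_cast this
    omega
  have hm : n + (m - n - 1) + 1 = m := by omega
  obtain ⟨hprime, hdvd⟩ := hP ⟨m - n - 1, hmk⟩
  rw [hm] at hdvd
  exact ⟨⟨m - n - 1, hmk⟩, Nat.le_floor (hsmooth _ hprime hdvd), hm⟩

theorem Psi_add_le_of_primeRep {n k : ℕ} (hk : primeRep n k) {z : ℝ} (hz : z ≤ k) (y : ℝ) :
    Psi (n + z) y ≤ Psi n y + π ⌊y⌋₊ := by
  obtain ⟨P, hPinj, hP⟩ := hk
  have hprimes : {i : Fin k | P i ≤ ⌊y⌋₊}.ncard ≤ π ⌊y⌋₊ := by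
    rw [← primesLE_card_eq_primeCounting, ← Set.ncard_coe_finset]
    exact Set.ncard_le_ncard_of_injOn P (fun i hi => mem_primesLE.2 ⟨hi, (hP i).1⟩)
      hPinj.injOn (Finset.finite_toSet _)
  rw [Psi_eq_ncard_smoothUpTo, Psi_eq_ncard_smoothUpTo]
  calc (smoothUpTo (n + z) y).ncard
      ≤ (smoothUpTo (n + z) y \ smoothUpTo n y).ncard + (smoothUpTo n y).ncard :=
        Set.ncard_le_ncard_sdiff_add_ncard _ _ (finite_smoothUpTo _ _)
    _ ≤ {i : Fin k | P i ≤ ⌊y⌋₊}.ncard + (smoothUpTo n y).ncard := by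
        gcongr
        exact (Set.ncard_le_ncard (smoothUpTo_add_diff_subset hP hz y) (Set.toFinite _)).trans
          (Set.ncard_image_le (Set.toFinite _))
    _ ≤ (smoothUpTo n y).ncard + π ⌊y⌋₊ := by omega

lemma eventually_primeCounting_floor_le {c : ℝ} (hc : 0 < c) :
    ∀ᶠ x : ℝ in atTop, (π ⌊x⌋₊ : ℝ) ≤ c * x := by
  filter_upwards [Chebyshev.eventually_primeCounting_le one_pos,
    Real.tendsto_log_atTop.eventually_ge_atTop ((Real.log 4 + 1) / c),
    eventually_gt_atTop 1] with x hπ hlog hx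
  have hlog0 : 0 < Real.log x := Real.log_pos hx
  calc (π ⌊x⌋₊ : ℝ) ≤ (Real.log 4 + 1) * x / Real.log x := hπ
    _ ≤ c * x := by
      have hlog' : Real.log 4 + 1 ≤ c * Real.log x := (div_le_iff₀' hc).1 hlog
      rw [div_le_iff₀ hlog0]
      nlinarith

theorem g_lt_rpow_alpha_general (α c₁ : ℝ) (hα0 : 3 / 8 < α) (hc : c₁ > 0)
    (h : ∃ N : ℕ, ∀ n : ℕ, n ≥ N →
      (Psi ((n : ℝ) + (n : ℝ) ^ α) ((n : ℝ) ^ α) : ℝ) >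
        (Psi (n : ℝ) ((n : ℝ) ^ α) : ℝ) + c₁ * (n : ℝ) ^ α) :
    ∃ N : ℕ, ∀ n : ℕ, n ≥ N → ∀ k : ℕ, primeRep n k → (k : ℝ) < (n : ℝ) ^ α := by
  obtain ⟨N₀, hPsi⟩ := h
  have hy : Tendsto (fun n : ℕ => (n : ℝ) ^ α) atTop atTop :=
    (tendsto_rpow_atTop (by linarith)).comp tendsto_natCast_atTop_atTop
  obtain ⟨N₁, hπ⟩ := eventually_atTop.1 (hy.eventually (eventually_primeCounting_floor_le hc))
  refine ⟨max N₀ N₁, fun n hn k hk => ?_⟩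
  by_contra! hkn
  have hkey : (Psi (n + (n : ℝ) ^ α) ((n : ℝ) ^ α) : ℝ) ≤
      Psi n ((n : ℝ) ^ α) + π ⌊(n : ℝ) ^ α⌋₊ := by
    exact_mod_cast Psi_add_le_of_primeRep hk hkn _
  linarith [hPsi n (le_of_max_le_left hn), hπ n (le_of_max_le_right hn)]

/-- If `Ψ(n + n^α, n^α) − Ψ(n, n^α) > c₁ n^α` for large `n`, with
`3/8 < α < 1/2` and `c₁ > 0`, then `g(n) < n^α` for large `n`. -/
theorem g_lt_rpow_alpha (α c₁ : ℝ) (hα0 : 3 / 8 < α) (hα : α < 1 / 2) (hc : c₁ > 0)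
    (h : ∃ N : ℕ, ∀ n : ℕ, n ≥ N →
      (Psi ((n : ℝ) + (n : ℝ) ^ α) ((n : ℝ) ^ α) : ℝ) >
        (Psi (n : ℝ) ((n : ℝ) ^ α) : ℝ) + c₁ * (n : ℝ) ^ α) :
    ∃ N : ℕ, ∀ n : ℕ, n ≥ N → ∀ k : ℕ, primeRep n k → (k : ℝ) < (n : ℝ) ^ α :=
  g_lt_rpow_alpha_general α c₁ hα0 hc h
end
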